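/- Generalized invariant for strcpy: for all lists s, g of integers and integers n, k, if 0 ≤ n < length s, n < length g, select(s,n) = 0, select(s,i) ≠ 0 for all 0 ≤ i ≤ n-1, 0 ≤ k ≤ n, select(s,j) ≠ 0 for all 0 ≤ j ≤ k-1, and select(g,j) = select(s,j) for all 0 ≤ j ≤ k-1, then strcpyAux(g, s, k) returns (non-error) a list y with select(y, i) = select(s, i) for all 0 ≤ i ≤ n. -/
import Mathlib

def select (a : List ℤ) (k : ℤ) : ℤ :=
  if 0 ≤ k ∧ k < (a.length : ℤ) then a.getD k.toNat 0 else 0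

def store (a : List ℤ) (k v : ℤ) : List ℤ :=
  if 0 ≤ k ∧ k < (a.length : ℤ) then a.set k.toNat v else a

def strcpyAux (g s : List ℤ) (i : ℤ) : List ℤ ⊕ Unit :=
  if _h : i < 0 ∨ (s.length : ℤ) ≤ i then Sum.inr ()
  else if select s i = 0 then
    if (g.length : ℤ) ≤ i then Sum.inr () else Sum.inl (store g i 0)
  else if (g.length : ℤ) ≤ i then Sum.inr ()
  else strcpyAux (store g i (select s i)) s (i + 1)
termination_by ((s.length : ℤ) - i).toNat
decreasing_by omega

lemma store_length (a : List ℤ) (k v : ℤ) : (store a k v).length = a.length := by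
  unfold store; split <;> simp

lemma select_store_same (a : List ℤ) (k v : ℤ) (h1 : 0 ≤ k) (h2 : k < (a.length : ℤ)) :
    select (store a k v) k = v := by
  unfold store
  rw [if_pos ⟨h1, h2⟩]
  unfold select
  rw [if_pos (by simp only [List.length_set]; exact ⟨h1, h2⟩)]
  rw [List.getD_eq_getElem?_getD, List.getElem?_set_self (by omega)]
  simp

lemma select_store_ne (a : List ℤ) (k v j : ℤ) (h : j ≠ k) :
    select (store a k v) j = select a j := by
  unfold select store
  split
  · simp only [List.length_set]
    split
    · rw [List.getD_eq_getElem?_getD, List.getD_eq_getElem?_getD,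
        List.getElem?_set_ne (by omega)]
    · rfl
  · rfl

theorem stmt_16 : ∀ (s g : List ℤ) (n k : ℤ), 0 ≤ n → n < (s.length : ℤ) →
    n < (g.length : ℤ) → select s n = 0 →
    (∀ i : ℤ, 0 ≤ i → i ≤ n - 1 → select s i ≠ 0) →
    0 ≤ k → k ≤ n →
    (∀ j : ℤ, 0 ≤ j → j ≤ k - 1 → select s j ≠ 0) →
    (∀ j : ℤ, 0 ≤ j → j ≤ k - 1 → select g j = select s j) →
    ∃ y : List ℤ, strcpyAux g s k = Sum.inl y ∧
      ∀ i : ℤ, 0 ≤ i → i ≤ n → select y i = select s i := by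
  intro s g n k hn hns hng hsn hpre hk0 hkn hpre2 hgq
  obtain ⟨m, hm⟩ : ∃ m, (n - k).toNat = m := ⟨_, rfl⟩
  induction m using Nat.strong_induction_on generalizing g k with
  | _ m ih =>
  rw [strcpyAux]
  rw [dif_neg (by omega)]
  by_cases hz : select s k = 0
  · -- k must equal n
    have hkeq : k = n := by
      by_contra hne
      exact hpre k hk0 (by omega) hz
    rw [if_pos hz, if_neg (by omega)]
    refine ⟨store g k 0, rfl, ?_⟩
    intro i hi0 hin
    by_cases hie : i = k
    · subst hie
      rw [select_store_same g i 0 hi0 (by omega), hkeq, hsn]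
    · rw [select_store_ne g k 0 i hie]
      exact hgq i hi0 (by omega)
  · have hkn' : k < n := by
      rcases lt_or_eq_of_le hkn with h | h
      · exact h
      · exact absurd (h ▸ hsn) hz
    rw [if_neg hz, if_neg (by omega)]
    apply ih (n - (k + 1)).toNat (by omega) (store g k (select s k)) (k + 1)
      (by rw [store_length]; omega) (by omega) (by omega)
    · intro j hj0 hj
      by_cases hje : j = k
      · subst hje; exact hz
      · exact hpre2 j hj0 (by omega)
    · intro j hj0 hj
      by_cases hje : j = k
      · subst hje
        exact select_store_same g j (select s j) hj0 (by omega)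
      · rw [select_store_ne g k (select s k) j hje]
        exact hgq j hj0 (by omega)
    · omega
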